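/- arXiv:2205.04388 — 8 statements merged into one kernel-verified Lean document; each statement's English description precedes it below -/
import Mathlib

section
/- Let S and Q be periodic sequences in ℝ, each with an m-point motif and a minimal period (l for S, l' for Q). Then there exists t ∈ ℝ with Q = {x + t : x ∈ S} if and only if there exists s ∈ ZMod m such that D(Q)_i = D(S)_{i+s} for all i (indices mod m). In other words, the distance list considered up to cyclic permutation (equivalently, the lexicographically smallest cyclic rotation SDL^o) is a complete invariant of periodic sequences up to translation. -/
/-- A periodic sequence in `ℝ` with an `m`-point motif `p` and period `l`:
the set `{p i + l * j : i ∈ Fin m, j ∈ ℤ}` where `0 ≤ p 0 < p 1 < ⋯ < p (m-1) < l`. -/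
structure PSeq (m : ℕ) where
  m_pos : 0 < m
  l : ℝ
  l_pos : 0 < l
  p : Fin m → ℝ
  p_strict : StrictMono p
  p0_nonneg : 0 ≤ p ⟨0, m_pos⟩
  p_lt : ∀ i, p i < l

namespace PSeq

variable {m : ℕ}

/-- The set of points of the periodic sequence. -/
def pts (S : PSeq m) : Set ℝ := {x | ∃ (i : Fin m) (j : ℤ), x = S.p i + S.l * j}

/-- The period is minimal: the same set of points cannot be produced with a smaller period. -/
def IsMinimal (S : PSeq m) : Prop := ∀ (m' : ℕ) (T : PSeq m'), T.pts = S.pts → S.l ≤ T.l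

/-- The distance list `D` of the periodic sequence, indexed by `ZMod m`:
`D i = p (i+1) - p i` for `i < m - 1`, and `D (m-1) = (p 0 + l) - p (m-1)`. -/
noncomputable def D (S : PSeq m) : ZMod m → ℝ := fun i =>
  letI : NeZero m := ⟨S.m_pos.ne'⟩
  if h : i.val + 1 < m then S.p ⟨i.val + 1, h⟩ - S.p ⟨i.val, i.val_lt⟩
  else S.p ⟨0, S.m_pos⟩ + S.l - S.p ⟨i.val, i.val_lt⟩

end PSeq

/-- The cyclic shift `σ_s` acting on vectors indexed by `ZMod n`: `(σ_s v) i = v (i + s)`. -/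
def shiftVec {n : ℕ} (s : ZMod n) (v : ZMod n → ℝ) : ZMod n → ℝ := fun i => v (i + s)

/-- The reversal `ρ`: `(ρ v) i = v (m - 1 - i)` (note `m - 1 = -1` in `ZMod m`). -/
def revVec {n : ℕ} (v : ZMod n → ℝ) : ZMod n → ℝ := fun i => v (-1 - i)

/-! Listing the points of a periodic sequence increasingly as `enum : ℤ → ℝ`, consecutive gaps are
the entries of `D` read cyclically. A translation `Q = S + t` matches the two lists up to an index
shift `c`, which becomes the cyclic shift `s = c` of the distance lists; conversely, equal gaps
make `Q.enum k - S.enum (k + c)` constant. -/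

/-- Comparing the two enumerations gives an order automorphism of `ℤ`; it commutes with `succ`,
hence is a translation. -/
theorem exists_add_of_strictMono_of_range_eq {α : Type*} [LinearOrder α] {f g : ℤ → α}
    (hf : StrictMono f) (hg : StrictMono g) (h : Set.range g = Set.range f) :
    ∃ c : ℤ, ∀ k, g k = f (k + c) := by
  let e : ℤ ≃o ℤ :=
    (hg.orderIso g).trans ((OrderIso.setCongr _ _ h).trans (hf.orderIso f).symm)
  have hfe : ∀ k, f (e k) = g k := fun k =>
    congrArg Subtype.val ((hf.orderIso f).apply_symm_apply ⟨g k, h ▸ ⟨k, rfl⟩⟩)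
  have he : Function.Periodic (fun k => e k - k) 1 := fun k => by
    simp only [← Order.succ_eq_add_one, e.map_succ]
    simp only [Order.succ_eq_add_one, add_sub_add_right_eq_sub]
  refine ⟨e 0, fun k => ?_⟩
  have := he.int_mul_eq k
  simp only [mul_one, Int.cast_id] at this
  rw [← hfe]
  congr 1
  omega

theorem Int.exists_eq_mul_add_fin {m : ℕ} (hm : 0 < m) (k : ℤ) :
    ∃ (q : ℤ) (r : Fin m), k = m * q + r := by
  have hm' : (0 : ℤ) < m := Int.natCast_pos.mpr hm
  have h0 := Int.emod_nonneg k hm'.ne'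
  have h1 := Int.emod_lt_of_pos k hm'
  refine ⟨k / m, ⟨(k % m).toNat, by omega⟩, ?_⟩
  simp only [Int.toNat_of_nonneg h0]
  exact (Int.mul_ediv_add_emod k m).symm

namespace PSeq

variable {m : ℕ} (S Q : PSeq m)

/-- The points of `S` listed in increasing order. -/
noncomputable def enum (k : ℤ) : ℝ :=
  S.p ⟨(k % m).toNat, by
    have := S.m_pos
    have := Int.emod_lt_of_pos k (Int.natCast_pos.mpr this)
    omega⟩ + S.l * (k / m : ℤ)

theorem enum_mul_add (q : ℤ) (r : Fin m) : S.enum (m * q + r) = S.p r + S.l * q := by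
  have hm : (0 : ℤ) < m := Int.natCast_pos.mpr S.m_pos
  have hr : ((m : ℤ) * q + r) % m = r := by
    rw [add_comm, Int.add_mul_emod_self_left,
      Int.emod_eq_of_lt (by positivity) (by exact_mod_cast r.isLt)]
  have hq : ((m : ℤ) * q + r) / m = q := by
    rw [add_comm, Int.add_mul_ediv_left _ _ hm.ne',
      Int.ediv_eq_zero_of_lt (by positivity) (by exact_mod_cast r.isLt), zero_add]
  simp only [enum, hr, hq, Int.toNat_natCast]

theorem D_natCast (r : Fin m) :
    S.D r = if h : r.val + 1 < m then S.p ⟨r + 1, h⟩ - S.p r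
      else S.p ⟨0, S.m_pos⟩ + S.l - S.p r := by
  simp only [D, ZMod.val_cast_of_lt r.isLt]

theorem enum_add_one (k : ℤ) : S.enum (k + 1) = S.enum k + S.D k := by
  obtain ⟨q, r, rfl⟩ := Int.exists_eq_mul_add_fin S.m_pos k
  have hDr : S.D ((m * q + r : ℤ) : ZMod m) = S.D r := by simp
  rw [hDr, S.D_natCast, S.enum_mul_add]
  split_ifs with h
  · have hk : (m : ℤ) * q + r + 1 = m * q + (⟨r + 1, h⟩ : Fin m) := by push_cast; ring
    rw [hk, S.enum_mul_add]
    ring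
  · have hr : (r : ℤ) + 1 = m := by have := r.isLt; omega
    have hk : (m : ℤ) * q + r + 1 = m * (q + 1) + (⟨0, S.m_pos⟩ : Fin m) := by
      push_cast
      linear_combination hr
    rw [hk, S.enum_mul_add]
    push_cast
    ring

theorem D_pos (i : ZMod m) : 0 < S.D i := by
  have : NeZero m := ⟨S.m_pos.ne'⟩
  unfold D
  split_ifs with h
  · exact sub_pos.2 (S.p_strict (Fin.mk_lt_mk.2 (Nat.lt_succ_self _)))
  · have := S.p_lt ⟨i.val, i.val_lt⟩
    have := S.p0_nonneg
    linarith

theorem D_intCast (k : ℤ) : S.D k = S.enum (k + 1) - S.enum k := by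
  rw [S.enum_add_one]
  ring

theorem strictMono_enum : StrictMono S.enum :=
  strictMono_int_of_lt_succ fun k => by
    rw [S.enum_add_one]
    exact lt_add_of_pos_right _ (S.D_pos k)

theorem pts_eq_range_enum : S.pts = Set.range S.enum := by
  ext x
  constructor
  · rintro ⟨i, j, rfl⟩
    exact ⟨m * j + i, S.enum_mul_add j i⟩
  · rintro ⟨k, rfl⟩
    obtain ⟨q, r, rfl⟩ := Int.exists_eq_mul_add_fin S.m_pos k
    exact ⟨r, q, S.enum_mul_add q r⟩

theorem pts_eq_image_add_iff (t : ℝ) :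
    Q.pts = (· + t) '' S.pts ↔ ∃ c : ℤ, ∀ k, Q.enum k = S.enum (k + c) + t := by
  have hrange : (· + t) '' S.pts = Set.range fun k => S.enum k + t := by
    rw [S.pts_eq_range_enum, ← Set.range_comp]; rfl
  rw [hrange, Q.pts_eq_range_enum]
  constructor
  · intro h
    exact exists_add_of_strictMono_of_range_eq
      (S.strictMono_enum.add_const t) Q.strictMono_enum h
  · rintro ⟨c, hc⟩
    rw [funext hc]
    exact (add_right_surjective c).range_comp (fun k => S.enum k + t)

theorem exists_enum_eq_iff :
    (∃ t : ℝ, ∃ c : ℤ, ∀ k, Q.enum k = S.enum (k + c) + t) ↔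
    ∃ s : ZMod m, ∀ i : ZMod m, Q.D i = S.D (i + s) := by
  constructor
  · rintro ⟨t, c, hc⟩
    refine ⟨c, fun i => ?_⟩
    obtain ⟨k, rfl⟩ := ZMod.intCast_surjective i
    rw [← Int.cast_add, D_intCast, D_intCast, hc, hc, add_right_comm]
    ring
  · rintro ⟨s, hs⟩
    obtain ⟨c, rfl⟩ := ZMod.intCast_surjective s
    refine ⟨Q.enum 0 - S.enum c, c, fun k => ?_⟩
    have hper : Function.Periodic (fun k : ℤ => Q.enum k - S.enum (k + c)) 1 := fun k => by
      have := hs k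
      rw [← Int.cast_add, D_intCast, D_intCast, add_right_comm] at this
      simp only
      linarith
    have := hper.int_mul_eq k
    simp only [mul_one, Int.cast_id, zero_add] at this
    linarith

end PSeq

theorem distance_list_complete_up_to_translation_general {m : ℕ} (S Q : PSeq m) :
    (∃ t : ℝ, Q.pts = (fun x => x + t) '' S.pts) ↔
    ∃ s : ZMod m, ∀ i : ZMod m, Q.D i = S.D (i + s) := by
  simp only [PSeq.pts_eq_image_add_iff]
  exact PSeq.exists_enum_eq_iff S Q

/-- the distance list up to cyclic permutation is a complete invariant
of periodic sequences in `ℝ` up to translation. -/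
theorem distance_list_complete_up_to_translation {m : ℕ} (S Q : PSeq m)
    (hS : S.IsMinimal) (hQ : Q.IsMinimal) :
    (∃ t : ℝ, Q.pts = (fun x => x + t) '' S.pts) ↔
    ∃ s : ZMod m, ∀ i : ZMod m, Q.D i = S.D (i + s) :=
  distance_list_complete_up_to_translation_general S Q
end

section
/- For any m ≥ 1, k ≥ 1 and any vectors v, w : Fin m → ℝ, let v^(k), w^(k) : Fin (k·m) → ℝ denote the k-fold concatenations of v and w with themselves. Then min over s ∈ ZMod (k·m) of ‖v^(k) − σ_s(w^(k))‖_∞ equals min over s ∈ ZMod m of ‖v − σ_s(w)‖_∞. -/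
/-- The Minkowski sup-norm `‖v‖_∞ = max_i |v i|` of a vector indexed by `ZMod n`, `n > 0`. -/
noncomputable def supNorm {n : ℕ} (hn : 0 < n) (v : ZMod n → ℝ) : ℝ :=
  letI : NeZero n := ⟨hn.ne'⟩
  Finset.univ.sup' (Finset.univ_nonempty_iff.mpr ⟨0⟩) fun i => |v i|

/-- The `k`-fold concatenation `v^(k)` of a vector `v` indexed by `ZMod m`:
`(v^(k)) (j * m + i) = v i` for `0 ≤ j < k`, `0 ≤ i < m`. -/
def concatVec (k : ℕ) {m : ℕ} (v : ZMod m → ℝ) : ZMod (k * m) → ℝ :=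
  fun i => v ((i.val : ZMod m))

/-- `min_{s ∈ ZMod n} ‖v - σ_s w‖_∞`. -/
noncomputable def minShiftDist {n : ℕ} (hn : 0 < n) (v w : ZMod n → ℝ) : ℝ :=
  letI : NeZero n := ⟨hn.ne'⟩
  Finset.univ.inf' (Finset.univ_nonempty_iff.mpr ⟨0⟩)
    fun s => supNorm hn fun i => v i - shiftVec s w i

section Aux

lemma sup'_comp_surj {α β : Type*} [Fintype α] [Fintype β] [Nonempty α] [Nonempty β]
    (f : α → β) (hf : Function.Surjective f) (g : β → ℝ)
    (hα : (Finset.univ : Finset α).Nonempty) (hβ : (Finset.univ : Finset β).Nonempty) :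
    (Finset.univ.sup' hα fun a => g (f a)) = Finset.univ.sup' hβ g := by
  apply le_antisymm
  · exact Finset.sup'_le _ _ fun a _ => Finset.le_sup' g (Finset.mem_univ (f a))
  · refine Finset.sup'_le _ _ fun b _ => ?_
    obtain ⟨a, rfl⟩ := hf b
    exact Finset.le_sup' (fun a => g (f a)) (Finset.mem_univ a)

lemma inf'_comp_surj {α β : Type*} [Fintype α] [Fintype β] [Nonempty α] [Nonempty β]
    (f : α → β) (hf : Function.Surjective f) (g : β → ℝ)
    (hα : (Finset.univ : Finset α).Nonempty) (hβ : (Finset.univ : Finset β).Nonempty) :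
    (Finset.univ.inf' hα fun a => g (f a)) = Finset.univ.inf' hβ g := by
  apply le_antisymm
  · refine Finset.le_inf' _ _ fun b _ => ?_
    obtain ⟨a, rfl⟩ := hf b
    exact Finset.inf'_le (fun a => g (f a)) (Finset.mem_univ a)
  · exact Finset.le_inf' _ _ fun a _ => Finset.inf'_le g (Finset.mem_univ (f a))

/-- The reduction map `ZMod (k*m) → ZMod m`. -/
def redMap (k m : ℕ) (i : ZMod (k * m)) : ZMod m := (i.val : ZMod m)

lemma redMap_add (k m : ℕ) (hm : 0 < m) (hk : 0 < k) (i s : ZMod (k * m)) :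
    redMap k m (i + s) = redMap k m i + redMap k m s := by
  haveI : NeZero (k * m) := ⟨(Nat.mul_pos hk hm).ne'⟩
  unfold redMap
  rw [ZMod.val_add]
  have h1 : ((k * m : ℕ) : ZMod m) = 0 := by
    push_cast [ZMod.natCast_self]; ring
  have := Nat.mod_add_div (i.val + s.val) (k * m)
  calc (((i.val + s.val) % (k * m) : ℕ) : ZMod m)
      = (((i.val + s.val) % (k * m) : ℕ) : ZMod m) + ((k * m : ℕ) : ZMod m) * (((i.val + s.val) / (k * m) : ℕ) : ZMod m) := by
        rw [h1]; ring
    _ = ((i.val + s.val : ℕ) : ZMod m) := by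
        rw [← Nat.cast_mul, ← Nat.cast_add, this]
    _ = (i.val : ZMod m) + (s.val : ZMod m) := by push_cast [ZMod.natCast_self]; ring

lemma redMap_surj (k m : ℕ) (hm : 0 < m) (hk : 0 < k) :
    Function.Surjective (redMap k m) := by
  haveI : NeZero m := ⟨hm.ne'⟩
  haveI : NeZero (k * m) := ⟨(Nat.mul_pos hk hm).ne'⟩
  intro t
  refine ⟨(t.val : ZMod (k * m)), ?_⟩
  unfold redMap
  rw [ZMod.val_natCast_of_lt (lt_of_lt_of_le (ZMod.val_lt t) (Nat.le_mul_of_pos_left m hk))]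
  simp [ZMod.natCast_val, ZMod.cast_id]

end Aux

/-- the minimum over cyclic shifts of the sup-norm difference of `k`-fold
concatenations equals the corresponding minimum for the original vectors. -/
theorem minShiftDist_concat (m k : ℕ) (hm : 0 < m) (hk : 0 < k) (v w : ZMod m → ℝ) :
    minShiftDist (Nat.mul_pos hk hm) (concatVec k v) (concatVec k w) =
      minShiftDist hm v w := by
  haveI : NeZero m := ⟨hm.ne'⟩
  haveI : NeZero (k * m) := ⟨(Nat.mul_pos hk hm).ne'⟩
  unfold minShiftDist
  have hsur := redMap_surj k m hm hk
  have hsup : ∀ s : ZMod (k * m),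
      (supNorm (Nat.mul_pos hk hm) fun i => concatVec k v i - shiftVec s (concatVec k w) i)
        = supNorm hm fun i => v i - shiftVec (redMap k m s) w i := by
    intro s
    unfold supNorm shiftVec concatVec
    have : ∀ i : ZMod (k * m),
        |v (i.val : ZMod m) - w ((i + s).val : ZMod m)|
          = |v (redMap k m i) - w (redMap k m i + redMap k m s)| := by
      intro i
      rw [← redMap_add k m hm hk i s]
      rfl
    simp only [this]
    exact sup'_comp_surj (redMap k m) hsur (fun j => |v j - w (j + redMap k m s)|) _ _
  simp only [hsup]
  exact inf'_comp_surj (redMap k m) hsur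
    (fun t => supNorm hm fun i => v i - shiftVec t w i) _ _
end

section
/- For any periodic sequences S, Q ⊆ ℝ, the oriented elastic metric is symmetric: Elm^o(S,Q) = Elm^o(Q,S). -/
namespace PSeq

/-- The distance list of the multiple `(n / m) S` of a periodic sequence `S` with `m ∣ n`,
i.e. the `(n/m)`-fold concatenation of `D S`, indexed by `ZMod n`. -/
noncomputable def Dc {m : ℕ} (S : PSeq m) (n : ℕ) : ZMod n → ℝ :=
  fun i => S.D ((i.val : ZMod m))

/-- The oriented elastic metric `Elm^o(S,Q)`: with `n = lcm(m₁, m₂)`, the minimum over all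
cyclic shifts `s ∈ ZMod n` of `‖D((n/m₁)S) - σ_s(D((n/m₂)Q))‖_∞`. -/
noncomputable def Elmo {m₁ m₂ : ℕ} (S : PSeq m₁) (Q : PSeq m₂) : ℝ :=
  letI : NeZero (Nat.lcm m₁ m₂) := ⟨(Nat.lcm_pos S.m_pos Q.m_pos).ne'⟩
  Finset.univ.inf' (Finset.univ_nonempty_iff.mpr ⟨0⟩)
    fun s : ZMod (Nat.lcm m₁ m₂) =>
      supNorm (Nat.lcm_pos S.m_pos Q.m_pos)
        fun i => S.Dc (Nat.lcm m₁ m₂) i - shiftVec s (Q.Dc (Nat.lcm m₁ m₂)) i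

/-- The unoriented elastic metric `Elm(S,Q)`: the minimum over all `2n` permutations
`σ_s` and `σ_s ∘ ρ` of `‖D((n/m₁)S) - σ(D((n/m₂)Q))‖_∞`, where `n = lcm(m₁, m₂)`. -/
noncomputable def Elm {m₁ m₂ : ℕ} (S : PSeq m₁) (Q : PSeq m₂) : ℝ :=
  letI : NeZero (Nat.lcm m₁ m₂) := ⟨(Nat.lcm_pos S.m_pos Q.m_pos).ne'⟩
  min
    (Finset.univ.inf' (Finset.univ_nonempty_iff.mpr ⟨0⟩)
      fun s : ZMod (Nat.lcm m₁ m₂) =>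
        supNorm (Nat.lcm_pos S.m_pos Q.m_pos)
          fun i => S.Dc (Nat.lcm m₁ m₂) i - shiftVec s (Q.Dc (Nat.lcm m₁ m₂)) i)
    (Finset.univ.inf' (Finset.univ_nonempty_iff.mpr ⟨0⟩)
      fun s : ZMod (Nat.lcm m₁ m₂) =>
        supNorm (Nat.lcm_pos S.m_pos Q.m_pos)
          fun i => S.Dc (Nat.lcm m₁ m₂) i - shiftVec s (revVec (Q.Dc (Nat.lcm m₁ m₂))) i)

end PSeq

lemma supNorm_swap {n : ℕ} (hn : 0 < n) (v w : ZMod n → ℝ) (s : ZMod n) :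
    supNorm hn (fun i => w i - v (i + -s)) = supNorm hn (fun i => v i - w (i + s)) := by
  letI : NeZero n := ⟨hn.ne'⟩
  unfold supNorm
  apply le_antisymm
  · apply Finset.sup'_le
    intro i _
    have h1 : |w i - v (i + -s)| = |v (i + -s) - w (i + -s + s)| := by
      rw [neg_add_cancel_right, abs_sub_comm]
    rw [h1]
    exact Finset.le_sup' (fun i => |v i - w (i + s)|) (Finset.mem_univ (i + -s))
  · apply Finset.sup'_le
    intro i _
    have h1 : |v i - w (i + s)| = |w (i + s) - v (i + s + -s)| := by
      rw [add_neg_cancel_right, abs_sub_comm]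
    rw [h1]
    exact Finset.le_sup' (fun i => |w i - v (i + -s)|) (Finset.mem_univ (i + s))

lemma inf_swap {n : ℕ} (hn : 0 < n) (v w : ZMod n → ℝ) :
    letI : NeZero n := ⟨hn.ne'⟩
    Finset.univ.inf' (Finset.univ_nonempty_iff.mpr ⟨0⟩)
      (fun s : ZMod n => supNorm hn (fun i => v i - w (i + s)))
    = Finset.univ.inf' (Finset.univ_nonempty_iff.mpr ⟨0⟩)
      (fun s : ZMod n => supNorm hn (fun i => w i - v (i + s))) := by
  letI : NeZero n := ⟨hn.ne'⟩
  apply le_antisymm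
  · apply Finset.le_inf'
    intro s _
    calc Finset.univ.inf' (Finset.univ_nonempty_iff.mpr ⟨0⟩)
          (fun s : ZMod n => supNorm hn (fun i => v i - w (i + s)))
        ≤ supNorm hn (fun i => v i - w (i + -s)) :=
          Finset.inf'_le _ (Finset.mem_univ (-s))
      _ = supNorm hn (fun i => w i - v (i + s)) := supNorm_swap hn w v s
  · apply Finset.le_inf'
    intro s _
    calc Finset.univ.inf' (Finset.univ_nonempty_iff.mpr ⟨0⟩)
          (fun s : ZMod n => supNorm hn (fun i => w i - v (i + s)))
        ≤ supNorm hn (fun i => w i - v (i + -s)) :=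
          Finset.inf'_le _ (Finset.mem_univ (-s))
      _ = supNorm hn (fun i => v i - w (i + s)) := supNorm_swap hn v w s

noncomputable def ElmoF {m₁ m₂ : ℕ} (S : PSeq m₁) (Q : PSeq m₂) (n : ℕ) : ℝ :=
  if hn : 0 < n then
    letI : NeZero n := ⟨hn.ne'⟩
    Finset.univ.inf' (Finset.univ_nonempty_iff.mpr ⟨0⟩)
      (fun s : ZMod n => supNorm hn fun i => S.Dc n i - shiftVec s (Q.Dc n) i)
  else 0

lemma Elmo_eq_F {m₁ m₂ : ℕ} (S : PSeq m₁) (Q : PSeq m₂) :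
    PSeq.Elmo S Q = ElmoF S Q (Nat.lcm m₁ m₂) := by
  rw [ElmoF, dif_pos (Nat.lcm_pos S.m_pos Q.m_pos)]
  rfl

lemma ElmoF_swap {m₁ m₂ : ℕ} (S : PSeq m₁) (Q : PSeq m₂) (n : ℕ) :
    ElmoF S Q n = ElmoF Q S n := by
  unfold ElmoF
  split
  · next hn => exact inf_swap hn (S.Dc n) (Q.Dc n)
  · rfl

/-- the oriented elastic metric is symmetric. -/
theorem Elmo_symm {m₁ m₂ : ℕ} (S : PSeq m₁) (Q : PSeq m₂) :
    PSeq.Elmo S Q = PSeq.Elmo Q S := by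
  rw [Elmo_eq_F S Q, Elmo_eq_F Q S, ElmoF_swap, Nat.lcm_comm m₂ m₁]
end

section
/- For any periodic sequences S, Q, T ⊆ ℝ, the oriented elastic metric satisfies the triangle inequality: Elm^o(S,T) ≤ Elm^o(S,Q) + Elm^o(Q,T). -/
/-!
Every distance list `D((n/m)S)` is `D(S)` pulled back along the reduction `ZMod n → ZMod m`,
and pulling back both arguments along a surjective reduction does not change the minimum over
shifts of the sup-distance. So all three elastic distances can be computed at the common level
`N = lcm(m₁, m₂, m₃)`, where the triangle inequality follows by composing optimal shifts:
`‖u - σ_{s+t} w‖ ≤ ‖u - σ_s v‖ + ‖σ_s (v - σ_t w)‖`.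
-/

section SupNorm

variable {n N : ℕ}

lemma abs_le_supNorm (hn : 0 < n) (v : ZMod n → ℝ) (i : ZMod n) : |v i| ≤ supNorm hn v :=
  haveI : NeZero n := ⟨hn.ne'⟩
  Finset.le_sup' (fun j => |v j|) (Finset.mem_univ i)

lemma supNorm_le_iff (hn : 0 < n) (v : ZMod n → ℝ) (c : ℝ) :
    supNorm hn v ≤ c ↔ ∀ i, |v i| ≤ c := by
  have : NeZero n := ⟨hn.ne'⟩
  simp [supNorm, Finset.sup'_le_iff]

lemma supNorm_comp_of_surjective (hN : 0 < N) (hn : 0 < n) (v : ZMod n → ℝ)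
    {f : ZMod N → ZMod n} (hf : Function.Surjective f) :
    supNorm hN (v ∘ f) = supNorm hn v := by
  refine le_antisymm ((supNorm_le_iff hN _ _).2 fun i => abs_le_supNorm hn v (f i))
    ((supNorm_le_iff hn _ _).2 fun j => ?_)
  obtain ⟨i, rfl⟩ := hf j
  exact abs_le_supNorm hN (v ∘ f) i

lemma supNorm_sub_le (hn : 0 < n) (u v w : ZMod n → ℝ) :
    supNorm hn (fun i => u i - w i) ≤
      supNorm hn (fun i => u i - v i) + supNorm hn (fun i => v i - w i) :=
  (supNorm_le_iff hn _ _).2 fun i => (abs_sub_le (u i) (v i) (w i)).trans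
    (add_le_add (abs_le_supNorm hn (fun i => u i - v i) i)
      (abs_le_supNorm hn (fun i => v i - w i) i))

end SupNorm

noncomputable def shiftDist {n : ℕ} (hn : 0 < n) (u v : ZMod n → ℝ) : ℝ :=
  letI : NeZero n := ⟨hn.ne'⟩
  Finset.univ.inf' (Finset.univ_nonempty_iff.mpr ⟨0⟩)
    fun s => supNorm hn fun i => u i - shiftVec s v i

section ShiftDist

variable {n N : ℕ}

lemma shiftDist_le (hn : 0 < n) (u v : ZMod n → ℝ) (s : ZMod n) :
    shiftDist hn u v ≤ supNorm hn (fun i => u i - shiftVec s v i) :=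
  haveI : NeZero n := ⟨hn.ne'⟩
  Finset.inf'_le _ (Finset.mem_univ s)

lemma exists_shiftDist_eq (hn : 0 < n) (u v : ZMod n → ℝ) :
    ∃ s, shiftDist hn u v = supNorm hn (fun i => u i - shiftVec s v i) := by
  have : NeZero n := ⟨hn.ne'⟩
  obtain ⟨s, -, hs⟩ := Finset.exists_mem_eq_inf' (Finset.univ_nonempty_iff.mpr ⟨(0 : ZMod n)⟩)
    fun s => supNorm hn fun i => u i - shiftVec s v i
  exact ⟨s, hs⟩

lemma le_shiftDist (hn : 0 < n) (u v : ZMod n → ℝ) {c : ℝ}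
    (h : ∀ s, c ≤ supNorm hn (fun i => u i - shiftVec s v i)) : c ≤ shiftDist hn u v := by
  obtain ⟨s, hs⟩ := exists_shiftDist_eq hn u v
  exact hs ▸ h s

theorem shiftDist_triangle (hn : 0 < n) (u v w : ZMod n → ℝ) :
    shiftDist hn u w ≤ shiftDist hn u v + shiftDist hn v w := by
  obtain ⟨s, hs⟩ := exists_shiftDist_eq hn u v
  obtain ⟨t, ht⟩ := exists_shiftDist_eq hn v w
  have hshift : supNorm hn (fun i => shiftVec s v i - shiftVec (s + t) w i) =
      shiftDist hn v w := by
    rw [ht, ← supNorm_comp_of_surjective hn hn (fun i => v i - shiftVec t w i)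
      (add_right_surjective s)]
    simp only [shiftVec, Function.comp_def, add_assoc]
  calc shiftDist hn u w
      ≤ supNorm hn (fun i => u i - shiftVec (s + t) w i) := shiftDist_le hn u w (s + t)
    _ ≤ _ := supNorm_sub_le hn _ (shiftVec s v) _
    _ = shiftDist hn u v + shiftDist hn v w := by rw [hs, hshift]

lemma shiftDist_comp_of_surjective (hN : 0 < N) (hn : 0 < n) (u v : ZMod n → ℝ)
    {φ : ZMod N →+ ZMod n} (hφ : Function.Surjective φ) :
    shiftDist hN (u ∘ φ) (v ∘ φ) = shiftDist hn u v := by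
  have hcost (s : ZMod N) :
      supNorm hN (fun i => (u ∘ φ) i - shiftVec s (v ∘ φ) i) =
        supNorm hn (fun j => u j - shiftVec (φ s) v j) := by
    rw [← supNorm_comp_of_surjective hN hn _ hφ]
    simp only [shiftVec, Function.comp_def, map_add]
  refine le_antisymm ?_ (le_shiftDist hN _ _ fun s => hcost s ▸ shiftDist_le hn u v (φ s))
  obtain ⟨t, ht⟩ := exists_shiftDist_eq hn u v
  obtain ⟨s, rfl⟩ := hφ t
  exact ht ▸ hcost s ▸ shiftDist_le hN _ _ s

end ShiftDist

namespace PSeq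

lemma Dc_eq_comp_castHom {m N : ℕ} [NeZero N] (S : PSeq m) (h : m ∣ N) :
    S.Dc N = S.D ∘ ZMod.castHom h (ZMod m) := by
  funext i
  rw [Dc, Function.comp_apply, ZMod.castHom_apply, ZMod.cast_eq_val]

lemma Elmo_eq_shiftDist {m₁ m₂ N : ℕ} (S : PSeq m₁) (Q : PSeq m₂) (hN : 0 < N)
    (h : Nat.lcm m₁ m₂ ∣ N) : Elmo S Q = shiftDist hN (S.Dc N) (Q.Dc N) := by
  have hn := Nat.lcm_pos S.m_pos Q.m_pos
  have : NeZero (Nat.lcm m₁ m₂) := ⟨hn.ne'⟩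
  have : NeZero N := ⟨hN.ne'⟩
  let π := ZMod.castHom h (ZMod (Nat.lcm m₁ m₂))
  have hlift {m : ℕ} (R : PSeq m) (hm : m ∣ Nat.lcm m₁ m₂) :
      R.Dc N = R.Dc (Nat.lcm m₁ m₂) ∘ π := by
    rw [R.Dc_eq_comp_castHom hm, R.Dc_eq_comp_castHom (hm.trans h), Function.comp_assoc,
      ← RingHom.coe_comp, Subsingleton.elim ((ZMod.castHom hm (ZMod m)).comp π)]
  change shiftDist hn (S.Dc _) (Q.Dc _) = _
  rw [hlift S (Nat.dvd_lcm_left m₁ m₂), hlift Q (Nat.dvd_lcm_right m₁ m₂)]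
  exact (shiftDist_comp_of_surjective hN hn _ _ (φ := π.toAddMonoidHom)
    (ZMod.castHom_surjective h)).symm

end PSeq

/-- the oriented elastic metric satisfies the triangle inequality. -/
theorem Elmo_triangle {m₁ m₂ m₃ : ℕ} (S : PSeq m₁) (Q : PSeq m₂) (T : PSeq m₃) :
    PSeq.Elmo S T ≤ PSeq.Elmo S Q + PSeq.Elmo Q T := by
  set N := Nat.lcm m₁ (Nat.lcm m₂ m₃)
  have hN : 0 < N := Nat.lcm_pos S.m_pos (Nat.lcm_pos Q.m_pos T.m_pos)
  have h₁ : m₁ ∣ N := Nat.dvd_lcm_left _ _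
  have h₂ : m₂ ∣ N := (Nat.dvd_lcm_left m₂ m₃).trans (Nat.dvd_lcm_right _ _)
  have h₃ : m₃ ∣ N := (Nat.dvd_lcm_right m₂ m₃).trans (Nat.dvd_lcm_right _ _)
  rw [S.Elmo_eq_shiftDist T hN (Nat.lcm_dvd h₁ h₃), S.Elmo_eq_shiftDist Q hN (Nat.lcm_dvd h₁ h₂),
    Q.Elmo_eq_shiftDist T hN (Nat.lcm_dvd h₂ h₃)]
  exact shiftDist_triangle hN _ _ _
end

section
/- For any periodic sequences S, Q, T ⊆ ℝ, the unoriented elastic metric satisfies the triangle inequality: Elm(S,T) ≤ Elm(S,Q) + Elm(Q,T). -/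
/- ====================== auxiliary development ====================== -/

section Aux

variable {n : ℕ}

/-- group action on vectors: `act ε t v i = v (t + i)` or `v (t - i)`. -/
def actV (ε : Bool) (t : ZMod n) (v : ZMod n → ℝ) : ZMod n → ℝ :=
  fun i => v (t + cond ε (-i) i)

/-- The combined metric as a function of two vectors. -/
noncomputable def EV (hn : 0 < n) (a b : ZMod n → ℝ) : ℝ :=
  letI : NeZero n := ⟨hn.ne'⟩
  min
    (Finset.univ.inf' (Finset.univ_nonempty_iff.mpr ⟨0⟩)
      fun s : ZMod n => supNorm hn fun i => a i - shiftVec s b i)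
    (Finset.univ.inf' (Finset.univ_nonempty_iff.mpr ⟨0⟩)
      fun s : ZMod n => supNorm hn fun i => a i - shiftVec s (revVec b) i)

lemma Elm_eq_EV {m₁ m₂ : ℕ} (S : PSeq m₁) (Q : PSeq m₂) :
    PSeq.Elm S Q = EV (Nat.lcm_pos S.m_pos Q.m_pos)
      (S.Dc (Nat.lcm m₁ m₂)) (Q.Dc (Nat.lcm m₁ m₂)) := rfl

variable (hn : 0 < n)

lemma supNorm_le {v : ZMod n → ℝ} {c : ℝ}
    (h : ∀ i, |v i| ≤ c) : supNorm hn v ≤ c := by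
  haveI : NeZero n := ⟨hn.ne'⟩
  exact Finset.sup'_le _ _ fun i _ => h i

lemma le_supNorm (v : ZMod n → ℝ) (i : ZMod n) : |v i| ≤ supNorm hn v := by
  haveI : NeZero n := ⟨hn.ne'⟩
  exact Finset.le_sup' (fun j => |v j|) (Finset.mem_univ i)

lemma supNorm_triangle (a b c : ZMod n → ℝ) :
    supNorm hn (fun i => a i - c i) ≤
      supNorm hn (fun i => a i - b i) + supNorm hn (fun i => b i - c i) := by
  apply supNorm_le
  intro i
  calc |a i - c i| ≤ |a i - b i| + |b i - c i| := abs_sub_le _ _ _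
    _ ≤ _ := add_le_add (le_supNorm hn (fun j => a j - b j) i) (le_supNorm hn (fun j => b j - c j) i)

/-- `act` permutes coordinates, so it preserves the sup norm of differences. -/
lemma supNorm_act (ε : Bool) (t : ZMod n) (a b : ZMod n → ℝ) :
    supNorm hn (fun i => actV ε t a i - actV ε t b i)
      = supNorm hn (fun i => a i - b i) := by
  apply le_antisymm
  · apply supNorm_le
    intro i
    exact le_supNorm hn (fun j => a j - b j) (t + cond ε (-i) i)
  · apply supNorm_le
    intro j
    have : ∃ i : ZMod n, t + cond ε (-i) i = j := by
      cases ε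
      · exact ⟨j - t, by simp⟩
      · exact ⟨t - j, by simp⟩
    obtain ⟨i, hi⟩ := this
    calc |a j - b j| = |actV ε t a i - actV ε t b i| := by rw [actV, actV, hi]
      _ ≤ _ := le_supNorm hn (fun j => actV ε t a j - actV ε t b j) i

lemma EV_le_act (a b : ZMod n → ℝ) (ε : Bool) (t : ZMod n) :
    EV hn a b ≤ supNorm hn (fun i => a i - actV ε t b i) := by
  haveI : NeZero n := ⟨hn.ne'⟩
  cases ε
  · refine le_trans (min_le_left _ _) ?_
    refine le_trans (Finset.inf'_le _ (Finset.mem_univ t)) ?_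
    apply le_of_eq
    congr 1
    funext i
    simp [shiftVec, actV, add_comm]
  · refine le_trans (min_le_right _ _) ?_
    refine le_trans (Finset.inf'_le _ (Finset.mem_univ (-1 - t))) ?_
    apply le_of_eq
    congr 1
    funext i
    have : -1 - (i + (-1 - t)) = t + -i := by ring
    simp [shiftVec, actV, revVec, this]

lemma exists_act (a b : ZMod n → ℝ) :
    ∃ (ε : Bool) (t : ZMod n), EV hn a b = supNorm hn (fun i => a i - actV ε t b i) := by
  haveI : NeZero n := ⟨hn.ne'⟩
  rcases min_cases
    (Finset.univ.inf' (Finset.univ_nonempty_iff.mpr ⟨0⟩)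
      fun s : ZMod n => supNorm hn fun i => a i - shiftVec s b i)
    (Finset.univ.inf' (Finset.univ_nonempty_iff.mpr ⟨0⟩)
      fun s : ZMod n => supNorm hn fun i => a i - shiftVec s (revVec b) i) with
    ⟨h, _⟩ | ⟨h, _⟩
  · obtain ⟨s, _, hs⟩ := Finset.exists_mem_eq_inf' (Finset.univ_nonempty_iff.mpr ⟨(0 : ZMod n)⟩)
      (fun s : ZMod n => supNorm hn fun i => a i - shiftVec s b i)
    refine ⟨false, s, ?_⟩
    rw [EV, h, hs]
    congr 1
    funext i
    simp [shiftVec, actV, add_comm]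
  · obtain ⟨s, _, hs⟩ := Finset.exists_mem_eq_inf' (Finset.univ_nonempty_iff.mpr ⟨(0 : ZMod n)⟩)
      (fun s : ZMod n => supNorm hn fun i => a i - shiftVec s (revVec b) i)
    refine ⟨true, -1 - s, ?_⟩
    rw [EV, h, hs]
    congr 1
    funext i
    have : (-1 - s) + -i = -1 - (i + s) := by ring
    simp [shiftVec, actV, revVec, this]

lemma act_act (ε₁ ε₂ : Bool) (t₁ t₂ : ZMod n) (v : ZMod n → ℝ) :
    actV ε₁ t₁ (actV ε₂ t₂ v) = actV (xor ε₁ ε₂) (t₂ + cond ε₂ (-t₁) t₁) v := by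
  funext i
  cases ε₁ <;> cases ε₂ <;> simp only [actV, Bool.xor_false, Bool.xor_true,
    Bool.not_true, Bool.not_false, cond_true, cond_false] <;> (congr 1; ring)

lemma EV_triangle (a b c : ZMod n → ℝ) :
    EV hn a c ≤ EV hn a b + EV hn b c := by
  obtain ⟨ε₁, t₁, h₁⟩ := exists_act hn a b
  obtain ⟨ε₂, t₂, h₂⟩ := exists_act hn b c
  calc EV hn a c ≤ supNorm hn (fun i => a i - actV (xor ε₁ ε₂) (t₂ + cond ε₂ (-t₁) t₁) c i) :=
        EV_le_act hn a c _ _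
    _ = supNorm hn (fun i => a i - actV ε₁ t₁ (actV ε₂ t₂ c) i) := by rw [act_act]
    _ ≤ supNorm hn (fun i => a i - actV ε₁ t₁ b i)
        + supNorm hn (fun i => actV ε₁ t₁ b i - actV ε₁ t₁ (actV ε₂ t₂ c) i) :=
        supNorm_triangle hn _ _ _
    _ = EV hn a b + EV hn b c := by
        rw [supNorm_act hn ε₁ t₁ b (actV ε₂ t₂ c), ← h₁, ← h₂]

end Aux

section Lift

variable {n N : ℕ}

lemma pi_surj (hn : 0 < n) (hd : n ∣ N) :
    Function.Surjective (ZMod.castHom hd (ZMod n)) := by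
  haveI : NeZero n := ⟨hn.ne'⟩
  exact fun t => ⟨(t.val : ZMod N), by rw [map_natCast, ZMod.natCast_zmod_val]⟩

lemma supNorm_comp (hn : 0 < n) (hN : 0 < N) (hd : n ∣ N) (f : ZMod n → ℝ) :
    supNorm hN (fun i => f (ZMod.castHom hd (ZMod n) i)) = supNorm hn f := by
  apply le_antisymm
  · exact supNorm_le hN fun i => le_supNorm hn f _
  · apply supNorm_le hn
    intro j
    obtain ⟨i, rfl⟩ := pi_surj hn hd j
    exact le_supNorm hN (fun i => f (ZMod.castHom hd (ZMod n) i)) i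

lemma inf'_comp [NeZero n] [NeZero N] (hn : 0 < n) (hd : n ∣ N) (g : ZMod n → ℝ) :
    (Finset.univ.inf' (Finset.univ_nonempty_iff.mpr ⟨(0 : ZMod N)⟩)
      fun s : ZMod N => g (ZMod.castHom hd (ZMod n) s))
    = Finset.univ.inf' (Finset.univ_nonempty_iff.mpr ⟨(0 : ZMod n)⟩) g := by
  apply le_antisymm
  · apply Finset.le_inf'
    intro t _
    obtain ⟨s, rfl⟩ := pi_surj hn hd t
    exact Finset.inf'_le _ (Finset.mem_univ s)
  · apply Finset.le_inf'
    intro s _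
    exact Finset.inf'_le _ (Finset.mem_univ _)

lemma EV_lift (hn : 0 < n) (hN : 0 < N) (hd : n ∣ N) (a b : ZMod n → ℝ) :
    EV hn a b = EV hN (fun i => a (ZMod.castHom hd (ZMod n) i))
      (fun i => b (ZMod.castHom hd (ZMod n) i)) := by
  haveI : NeZero n := ⟨hn.ne'⟩
  haveI : NeZero N := ⟨hN.ne'⟩
  unfold EV
  congr 1
  · rw [← inf'_comp hn hd (fun s : ZMod n => supNorm hn fun i => a i - shiftVec s b i)]
    apply Finset.inf'_congr _ rfl
    intro s _
    rw [← supNorm_comp hn hN hd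
      (fun i => a i - shiftVec (ZMod.castHom hd (ZMod n) s) b i)]
    congr 1
    funext i
    simp only [shiftVec, map_add]
  · rw [← inf'_comp hn hd
      (fun s : ZMod n => supNorm hn fun i => a i - shiftVec s (revVec b) i)]
    apply Finset.inf'_congr _ rfl
    intro s _
    rw [← supNorm_comp hn hN hd
      (fun i => a i - shiftVec (ZMod.castHom hd (ZMod n) s) (revVec b) i)]
    congr 1
    funext i
    simp only [shiftVec, revVec, map_add, map_sub, map_neg, map_one]

lemma natCast_mod_of_dvd {m : ℕ} [NeZero m] (hmn : m ∣ n) (a : ℕ) :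
    ((a % n : ℕ) : ZMod m) = (a : ZMod m) := by
  conv_rhs => rw [← Nat.mod_add_div a n]
  push_cast
  rw [(ZMod.natCast_eq_zero_iff n m).mpr hmn]
  ring

lemma Dc_comp {m : ℕ} (S : PSeq m) (hn : 0 < n) (hN : 0 < N) (hm : m ∣ n) (hd : n ∣ N) :
    (fun i : ZMod N => S.Dc n (ZMod.castHom hd (ZMod n) i)) = S.Dc N := by
  haveI : NeZero n := ⟨hn.ne'⟩
  haveI : NeZero N := ⟨hN.ne'⟩
  haveI : NeZero m := ⟨S.m_pos.ne'⟩
  funext i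
  show S.D (((ZMod.castHom hd (ZMod n) i).val : ZMod m)) = S.D ((i.val : ZMod m))
  congr 1
  rw [ZMod.castHom_apply, ← ZMod.natCast_val, ZMod.val_natCast]
  exact natCast_mod_of_dvd hm i.val

end Lift

/-- the unoriented elastic metric satisfies the triangle inequality. -/
theorem Elm_triangle {m₁ m₂ m₃ : ℕ} (S : PSeq m₁) (Q : PSeq m₂) (T : PSeq m₃) :
    PSeq.Elm S T ≤ PSeq.Elm S Q + PSeq.Elm Q T := by
  set N := Nat.lcm (Nat.lcm m₁ m₂) m₃ with hNdef
  have h1 : m₁ ∣ N := (Nat.dvd_lcm_left _ _).trans (Nat.dvd_lcm_left _ _)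
  have h2 : m₂ ∣ N := (Nat.dvd_lcm_right _ _).trans (Nat.dvd_lcm_left _ _)
  have h3 : m₃ ∣ N := Nat.dvd_lcm_right _ _
  have hN : 0 < N := Nat.lcm_pos (Nat.lcm_pos S.m_pos Q.m_pos) T.m_pos
  have h13 : Nat.lcm m₁ m₃ ∣ N := Nat.lcm_dvd h1 h3
  have h12 : Nat.lcm m₁ m₂ ∣ N := Nat.lcm_dvd h1 h2
  have h23 : Nat.lcm m₂ m₃ ∣ N := Nat.lcm_dvd h2 h3
  rw [Elm_eq_EV S T, Elm_eq_EV S Q, Elm_eq_EV Q T]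
  rw [EV_lift (Nat.lcm_pos S.m_pos T.m_pos) hN h13,
      EV_lift (Nat.lcm_pos S.m_pos Q.m_pos) hN h12,
      EV_lift (Nat.lcm_pos Q.m_pos T.m_pos) hN h23]
  rw [Dc_comp S (Nat.lcm_pos S.m_pos T.m_pos) hN (Nat.dvd_lcm_left _ _) h13,
      Dc_comp T (Nat.lcm_pos S.m_pos T.m_pos) hN (Nat.dvd_lcm_right _ _) h13,
      Dc_comp S (Nat.lcm_pos S.m_pos Q.m_pos) hN (Nat.dvd_lcm_left _ _) h12,
      Dc_comp Q (Nat.lcm_pos S.m_pos Q.m_pos) hN (Nat.dvd_lcm_right _ _) h12,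
      Dc_comp Q (Nat.lcm_pos Q.m_pos T.m_pos) hN (Nat.dvd_lcm_left _ _) h23,
      Dc_comp T (Nat.lcm_pos Q.m_pos T.m_pos) hN (Nat.dvd_lcm_right _ _) h23]
  exact EV_triangle hN _ _ _
end

section
/- For any δ > 0 and any real r ≥ 0, there is no bijection h from the set A = {(n : ℝ) : n ∈ ℤ} to the set B = {(1+δ)·n : n ∈ ℤ} such that |x − h(x)| ≤ r for all x ∈ A. Consequently the bottleneck distance d_B(ℤ, (1+δ)ℤ) = inf over bijections h : A → B of sup_{x ∈ A} |x − h(x)| is infinite. -/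
/-- Auxiliary counting lemma: no bijection from `ℤ` to `(1+δ)ℤ` moves every point by `≤ r`. -/
lemma no_bounded_bij_scaled_lattice (δ : ℝ) (hδ : 0 < δ) (r : ℝ) (hr : 0 ≤ r) :
    ¬ ∃ h : ℝ → ℝ,
        Set.BijOn h {x : ℝ | ∃ n : ℤ, x = (n : ℝ)} {x : ℝ | ∃ n : ℤ, x = (1 + δ) * (n : ℝ)} ∧
        ∀ x ∈ {x : ℝ | ∃ n : ℤ, x = (n : ℝ)}, |x - h x| ≤ r := by
  rintro ⟨h, hbij, hmove⟩
  have h1δ : (0:ℝ) < 1 + δ := by linarith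
  obtain ⟨N, hN⟩ := exists_nat_gt ((2*r)/δ)
  have hNδ : 2*r < N*δ := by
    rwa [div_lt_iff₀ hδ] at hN
  set a : ℤ := ⌈(-r)/(1+δ)⌉ with ha
  set b : ℤ := ⌊((N:ℝ)+r)/(1+δ)⌋ with hb
  -- for each integer n, h n lies in B, with witness ⌊h n / (1+δ)⌋
  have hwit : ∀ n : ℤ, h (n:ℝ) = (1+δ) * (⌊h (n:ℝ) / (1+δ)⌋ : ℝ) := by
    intro n
    obtain ⟨m, hm⟩ := hbij.mapsTo ⟨n, rfl⟩
    have : h (n:ℝ) / (1+δ) = (m:ℝ) := by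
      rw [hm]; field_simp
    rw [this, Int.floor_intCast, ← this, mul_div_cancel₀ _ (ne_of_gt h1δ)]
  set f : ℤ → ℤ := fun n => ⌊h (n:ℝ) / (1+δ)⌋ with hf
  have hmaps : ∀ n ∈ Finset.Icc (0:ℤ) (N:ℤ), f n ∈ Finset.Icc a b := by
    intro n hn
    simp only [Finset.mem_Icc] at hn ⊢
    have hnA : (n:ℝ) ∈ {x : ℝ | ∃ n : ℤ, x = (n : ℝ)} := ⟨n, rfl⟩
    have hmv := hmove _ hnA
    rw [abs_le] at hmv
    have h0 : (0:ℝ) ≤ (n:ℝ) := by exact_mod_cast hn.1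
    have h1 : (n:ℝ) ≤ (N:ℝ) := by exact_mod_cast hn.2
    have hlow : -r ≤ h (n:ℝ) := by linarith [hmv.2]
    have hup : h (n:ℝ) ≤ (N:ℝ) + r := by linarith [hmv.1]
    have heq := hwit n
    constructor
    · rw [ha, Int.ceil_le]
      rw [div_le_iff₀ h1δ, mul_comm]
      rw [heq] at hlow; linarith
    · rw [hb, Int.le_floor]
      rw [le_div_iff₀ h1δ, mul_comm]
      rw [heq] at hup; linarith
  have hinj : Set.InjOn f (Finset.Icc (0:ℤ) (N:ℤ)) := by
    intro n1 _ n2 _ hfe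
    have : h (n1:ℝ) = h (n2:ℝ) := by
      rw [hwit n1, hwit n2, hf] at *
      simp only at hfe
      rw [hfe]
    have := hbij.injOn ⟨n1, rfl⟩ ⟨n2, rfl⟩ this
    exact_mod_cast this
  have hcard := Finset.card_le_card_of_injOn f hmaps hinj
  rw [Int.card_Icc, Int.card_Icc] at hcard
  -- real bound: b - a < N
  have hbR : (b:ℝ) ≤ ((N:ℝ)+r)/(1+δ) := Int.floor_le _
  have haR : (-r)/(1+δ) ≤ (a:ℝ) := Int.le_ceil _
  have hba : (b:ℝ) - (a:ℝ) < (N:ℝ) := by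
    have : ((N:ℝ)+r)/(1+δ) - (-r)/(1+δ) < (N:ℝ) := by
      rw [div_sub_div_same, div_lt_iff₀ h1δ]
      ring_nf
      nlinarith
    linarith
  have hbaZ : b - a < (N:ℤ) := by exact_mod_cast hba
  omega

/-- for any `δ > 0` and `r ≥ 0` there is no bijection from `ℤ` to `(1+δ)ℤ`
moving every point by at most `r`; consequently the bottleneck distance
`d_B(ℤ, (1+δ)ℤ)` is infinite. -/
theorem bottleneck_of_scaled_lattices_infinite (δ : ℝ) (hδ : 0 < δ) (r : ℝ) (hr : 0 ≤ r) :
    (¬ ∃ h : ℝ → ℝ,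
        Set.BijOn h {x : ℝ | ∃ n : ℤ, x = (n : ℝ)} {x : ℝ | ∃ n : ℤ, x = (1 + δ) * (n : ℝ)} ∧
        ∀ x ∈ {x : ℝ | ∃ n : ℤ, x = (n : ℝ)}, |x - h x| ≤ r) ∧
    (⨅ h : {h : ℝ → ℝ //
        Set.BijOn h {x : ℝ | ∃ n : ℤ, x = (n : ℝ)} {x : ℝ | ∃ n : ℤ, x = (1 + δ) * (n : ℝ)}},
      ⨆ x ∈ {x : ℝ | ∃ n : ℤ, x = (n : ℝ)}, ENNReal.ofReal |x - h.1 x|) = ⊤ := by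
  constructor
  · exact no_bounded_bij_scaled_lattice δ hδ r hr
  · rw [iInf_eq_top]
    intro h
    by_contra hS
    set S := ⨆ x ∈ {x : ℝ | ∃ n : ℤ, x = (n : ℝ)}, ENNReal.ofReal |x - h.1 x| with hSdef
    have hbound : ∀ x ∈ {x : ℝ | ∃ n : ℤ, x = (n : ℝ)}, |x - h.1 x| ≤ S.toReal := by
      intro x hx
      have hle : ENNReal.ofReal |x - h.1 x| ≤ S := by
        rw [hSdef]
        exact le_iSup₂ (f := fun x (_ : x ∈ {x : ℝ | ∃ n : ℤ, x = (n : ℝ)}) =>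
          ENNReal.ofReal |x - h.1 x|) x hx
      exact (ENNReal.ofReal_le_iff_le_toReal hS).mp hle
    exact no_bounded_bij_scaled_lattice δ hδ S.toReal ENNReal.toReal_nonneg
      ⟨h.1, h.2, hbound⟩
end

section
/- Let 0 ≤ r < 1/2 and 0 < ε < 1/2 − r, and let Λ_ε = {(j + k·ε, k) : j, k ∈ ℤ} ⊆ ℝ² be the lattice generated by the basis vectors (1,0) and (ε,1). Then there is no bijection g : Λ_ε → ℤ² with Euclidean distance ‖p − g(p)‖ ≤ r for all p ∈ Λ_ε. Consequently the bottleneck distance satisfies d_B(Λ_ε, ℤ²) ≥ 1/2 − ε. -/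
/-- The perturbed lattice `Λ_ε ⊆ ℝ²` generated by the basis `(1,0)`, `(ε,1)`. -/
def pertLattice (ε : ℝ) : Set (EuclideanSpace ℝ (Fin 2)) :=
  {p | ∃ j k : ℤ, p 0 = (j : ℝ) + (k : ℝ) * ε ∧ p 1 = (k : ℝ)}

/-- The integer lattice `ℤ² ⊆ ℝ²`. -/
def intLattice2 : Set (EuclideanSpace ℝ (Fin 2)) :=
  {p | ∃ j k : ℤ, p 0 = (j : ℝ) ∧ p 1 = (k : ℝ)}

lemma coord_le_norm (x : EuclideanSpace ℝ (Fin 2)) (i : Fin 2) : |x i| ≤ ‖x‖ := by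
  rw [EuclideanSpace.norm_eq]
  rw [← Real.sqrt_sq_eq_abs]
  apply Real.sqrt_le_sqrt
  have := Finset.single_le_sum (f := fun j => ‖x j‖ ^ 2)
    (fun j _ => by positivity) (Finset.mem_univ i)
  simpa [Real.norm_eq_abs, sq_abs] using this

lemma key_lemma (r' ε : ℝ) (h0 : 0 ≤ r') (hε0 : 0 < ε) (hlt : r' < 1/2 - ε)
    (g : EuclideanSpace ℝ (Fin 2) → EuclideanSpace ℝ (Fin 2))
    (hmap : Set.MapsTo g (pertLattice ε) intLattice2)
    (hd : ∀ p ∈ pertLattice ε, ‖p - g p‖ ≤ r') : False := by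
  set k : ℤ := ⌊r' / ε⌋ + 1 with hk
  have hkr : (k : ℝ) = (⌊r' / ε⌋ : ℝ) + 1 := by rw [hk]; push_cast; ring
  have hk1 : r' < (k : ℝ) * ε := by
    have := Int.lt_floor_add_one (r' / ε)
    have : r' / ε < (k : ℝ) := by rw [hkr]; linarith
    calc r' = (r' / ε) * ε := by field_simp
    _ < (k : ℝ) * ε := by exact mul_lt_mul_of_pos_right this hε0
  have hk2 : (k : ℝ) * ε ≤ r' + ε := by
    have := Int.floor_le (r' / ε)
    have h2 : (k : ℝ) ≤ r' / ε + 1 := by rw [hkr]; linarith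
    calc (k : ℝ) * ε ≤ (r' / ε + 1) * ε := mul_le_mul_of_nonneg_right h2 hε0.le
    _ = r' + ε := by field_simp
  have hhalf : (k : ℝ) * ε < 1/2 := by linarith
  set p : EuclideanSpace ℝ (Fin 2) := (WithLp.equiv 2 (Fin 2 → ℝ)).symm ![(k : ℝ) * ε, (k : ℝ)] with hp
  have hp0 : p 0 = (k : ℝ) * ε := rfl
  have hp1 : p 1 = (k : ℝ) := rfl
  have hpmem : p ∈ pertLattice ε := ⟨0, k, by rw [hp0]; push_cast; ring, hp1⟩
  obtain ⟨j', k', hq0, hq1⟩ := hmap hpmem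
  have hco : |p 0 - g p 0| ≤ r' := by
    have h1 : |(p - g p) 0| ≤ ‖p - g p‖ := coord_le_norm _ 0
    have h2 : (p - g p) 0 = p 0 - g p 0 := rfl
    rw [h2] at h1
    exact h1.trans (hd p hpmem)
  rw [hp0, hq0] at hco
  rcases le_or_gt (j' : ℝ) 0 with hj | hj
  · have : (k : ℝ) * ε - (j' : ℝ) ≤ |(k : ℝ) * ε - (j' : ℝ)| := le_abs_self _
    linarith
  · have hj1 : (1 : ℝ) ≤ (j' : ℝ) := by exact_mod_cast hj
    have : (j' : ℝ) - (k : ℝ) * ε ≤ |(k : ℝ) * ε - (j' : ℝ)| := by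
      rw [abs_sub_comm]; exact le_abs_self _
    linarith

/-- for `0 ≤ r < 1/2` and `0 < ε < 1/2 - r`, no bijection `Λ_ε → ℤ²` moves
every point by Euclidean distance at most `r`; consequently `d_B(Λ_ε, ℤ²) ≥ 1/2 - ε`. -/
theorem bottleneck_of_perturbed_lattice (r ε : ℝ) (hr0 : 0 ≤ r) (hr : r < 1/2)
    (hε0 : 0 < ε) (hε : ε < 1/2 - r) :
    (¬ ∃ g : EuclideanSpace ℝ (Fin 2) → EuclideanSpace ℝ (Fin 2),
        Set.BijOn g (pertLattice ε) intLattice2 ∧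
        ∀ p ∈ pertLattice ε, ‖p - g p‖ ≤ r) ∧
    ENNReal.ofReal (1/2 - ε) ≤
      ⨅ g : {g : EuclideanSpace ℝ (Fin 2) → EuclideanSpace ℝ (Fin 2) //
          Set.BijOn g (pertLattice ε) intLattice2},
        ⨆ p ∈ pertLattice ε, ENNReal.ofReal ‖p - g.1 p‖ := by
  constructor
  · rintro ⟨g, hbij, hd⟩
    exact key_lemma r ε hr0 hε0 (by linarith) g hbij.mapsTo hd
  · apply le_iInf
    intro g
    by_contra h
    push_neg at h
    set S := ⨆ p ∈ pertLattice ε, ENNReal.ofReal ‖p - g.1 p‖ with hS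
    have hStop : S ≠ ⊤ := h.ne_top
    have hSr : S.toReal < 1/2 - ε := by
      rw [← ENNReal.ofReal_toReal hStop] at h
      rwa [ENNReal.ofReal_lt_ofReal_iff (by linarith)] at h
    apply key_lemma S.toReal ε ENNReal.toReal_nonneg hε0 hSr g.1 g.2.mapsTo
    intro p hp
    have hle : ENNReal.ofReal ‖p - g.1 p‖ ≤ S := le_iSup₂ (f := fun p _ => ENNReal.ofReal ‖p - g.1 p‖) p hp
    rw [← ENNReal.ofReal_toReal hStop, ENNReal.ofReal_le_ofReal_iff ENNReal.toReal_nonneg] at hle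
    exact hle
end

section
/- Let d ≥ 1, m ≥ d + 1, set k = min(d+1, m−1), and let p, q : ZMod m → ℝ^d (Euclidean space) be cyclically ordered lists of points which are generic, meaning that for every j ∈ ZMod m the d+1 points p_j, p_{j+1}, …, p_{j+d} affinely span ℝ^d, and likewise for q. Then there exists an isometry f : ℝ^d → ℝ^d with f(p_j) = q_j for all j ∈ ZMod m if and only if ‖p_j − p_{j+i}‖ = ‖q_j − q_{j+i}‖ for all j ∈ ZMod m and all i ∈ {1, …, k}. -/
/-!
An isometry matching the cyclic lists is built from the first window `p 0, …, p d`, which is an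
affine basis congruent to `q 0, …, q d`: the linear map sending the edge vectors `p i - p 0` to
`q i - q 0` preserves their inner products, which are determined by the distances. The identity
`f (p k) = q k` then propagates along `k`, since a point of Euclidean space is determined by its
distances to an affinely spanning set, and the `d + 1` points preceding `p k` span.
-/

open Module Set
open scoped RealInnerProductSpace

theorem affineIndependent_of_affineSpan_eq_top {k V P ι : Type*} [DivisionRing k]
    [AddCommGroup V] [Module k V] [AddTorsor V P] [Fintype ι]
    {p : ι → P} (hp : affineSpan k (range p) = ⊤) (hc : Fintype.card ι = finrank k V + 1) :
    AffineIndependent k p := by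
  rw [affineIndependent_iff_finrank_vectorSpan_eq k p hc,
    AffineSubspace.vectorSpan_eq_top_of_affineSpan_eq_top k V P hp, finrank_top]

section Euclidean

variable {V P : Type*} [NormedAddCommGroup V] [InnerProductSpace ℝ V] [MetricSpace P]
  [NormedAddTorsor V P]

theorem eq_of_forall_dist_eq_of_affineSpan_eq_top {s : Set P} (hs : affineSpan ℝ s = ⊤)
    {x y : P} (h : ∀ z ∈ s, dist z x = dist z y) : x = y := by
  have : affineSpan ℝ s ≤ AffineSubspace.perpBisector x y :=
    affineSpan_le.mpr fun z hz => AffineSubspace.mem_perpBisector_iff_dist_eq.mpr (h z hz)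
  rwa [hs, top_le_iff, AffineSubspace.perpBisector_eq_top] at this

theorem inner_vsub_vsub_eq_dist_sq (a b o : P) :
    ⟪a -ᵥ o, b -ᵥ o⟫ = (dist a o ^ 2 + dist b o ^ 2 - dist a b ^ 2) / 2 := by
  rw [real_inner_eq_norm_mul_self_add_norm_mul_self_sub_norm_sub_mul_self_div_two,
    vsub_sub_vsub_cancel_right, dist_eq_norm_vsub V a o, dist_eq_norm_vsub V b o,
    dist_eq_norm_vsub V a b]
  ring

theorem Module.Basis.inner_map_map {W ι : Type*} [NormedAddCommGroup W]
    [InnerProductSpace ℝ W] (B : Basis ι ℝ V) {T : V →ₗ[ℝ] W}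
    (h : ∀ i j, ⟪T (B i), T (B j)⟫ = ⟪B i, B j⟫) (x y : V) : ⟪T x, T y⟫ = ⟪x, y⟫ := by
  have : (innerₗ W).compl₁₂ T T = innerₗ V := B.ext fun i => B.ext fun j => by simpa using h i j
  simpa using LinearMap.congr_fun₂ this x y

theorem AffineBasis.exists_isometryEquiv_of_congruent [FiniteDimensional ℝ V] {ι : Type*}
    (b : AffineBasis ι ℝ P) {w : ι → P} (h : Congruent b w) :
    ∃ f : P ≃ᵢ P, ∀ i, f (b i) = w i := by
  obtain ⟨i₀⟩ := b.nonempty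
  set B := b.basisOf i₀
  let T : V →ₗ[ℝ] V := B.constr ℝ fun j => w j -ᵥ w i₀
  have hT : ∀ j, T (B j) = w j -ᵥ w i₀ := B.constr_basis ℝ _
  have hdist := congruent_iff_dist_eq.1 h
  have hinner : ∀ x y, ⟪T x, T y⟫ = ⟪x, y⟫ := B.inner_map_map fun i j => by
    rw [hT, hT]
    simp only [B, b.basisOf_apply, inner_vsub_vsub_eq_dist_sq, hdist]
  let L : V ≃ₗᵢ[ℝ] V := (T.isometryOfInner hinner).toLinearIsometryEquiv rfl
  refine ⟨((AffineIsometryEquiv.vaddConst ℝ (b i₀)).symm.trans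
    (L.toAffineIsometryEquiv.trans (AffineIsometryEquiv.vaddConst ℝ (w i₀)))).toIsometryEquiv,
    fun i => ?_⟩
  by_cases hi : i = i₀
  · subst hi
    simp
  · have : L (b i -ᵥ b i₀) = w i -ᵥ w i₀ := by
      rw [← b.basisOf_apply i₀ ⟨i, hi⟩]
      exact hT ⟨i, hi⟩
    simp [this]

theorem Isometry.apply_eq_of_spanning_windows {α : Type*} [PseudoMetricSpace α]
    {f : α → P} (hf : Isometry f) {p : ℕ → α} {q : ℕ → P} {n : ℕ}
    (hq : ∀ j, affineSpan ℝ (range fun i : Fin (n + 1) => q (j + i)) = ⊤)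
    (hpq : ∀ a b, a ≤ b → b ≤ a + (n + 1) → dist (p a) (p b) = dist (q a) (q b))
    (hbase : ∀ i ≤ n, f (p i) = q i) (k : ℕ) : f (p k) = q k := by
  induction k using Nat.strong_induction_on with
  | _ k ih =>
    by_cases hk : k ≤ n
    · exact hbase k hk
    -- `f (p k)` and `q k` are equidistant from every point of the window `q (k-n-1), …, q (k-1)`
    refine (eq_of_forall_dist_eq_of_affineSpan_eq_top (hq (k - (n + 1))) ?_).symm
    rintro _ ⟨i, rfl⟩
    have hi := i.isLt
    dsimp only
    rw [← ih _ (by omega), hf.dist_eq, hpq _ _ (by omega) (by omega), ih _ (by omega)]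

end Euclidean

theorem dist_eq_of_cyclic_norm_sub_eq {E F : Type*} [SeminormedAddCommGroup E]
    [SeminormedAddCommGroup F] {m n : ℕ} (hnm : n ≤ m) {p : ZMod m → E} {q : ZMod m → F}
    (h : ∀ j : ZMod m, ∀ i : ℕ, 1 ≤ i → i ≤ min n (m - 1) →
      ‖p j - p (j + (i : ZMod m))‖ = ‖q j - q (j + (i : ZMod m))‖)
    {a b : ℕ} (hab : a ≤ b) (hb : b ≤ a + n) : dist (p a) (p b) = dist (q a) (q b) := by
  obtain ⟨i, rfl⟩ := Nat.exists_eq_add_of_le hab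
  rcases Nat.eq_zero_or_pos i with rfl | hi
  · simp
  -- a gap of exactly `m` (possible when `n = m`) joins a point to itself
  rcases eq_or_ne i m with rfl | him
  · simp
  · rw [dist_eq_norm, dist_eq_norm, Nat.cast_add]
    exact h a i hi (by omega)

theorem cyclic_distance_matrix_complete_general (d m : ℕ) (hm : d + 1 ≤ m)
    (p q : ZMod m → EuclideanSpace ℝ (Fin d))
    (hp : ∀ j : ZMod m,
      affineSpan ℝ (Set.range fun i : Fin (d + 1) => p (j + ((i : ℕ) : ZMod m))) = ⊤)
    (hq : ∀ j : ZMod m,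
      affineSpan ℝ (Set.range fun i : Fin (d + 1) => q (j + ((i : ℕ) : ZMod m))) = ⊤) :
    (∃ f : EuclideanSpace ℝ (Fin d) ≃ᵢ EuclideanSpace ℝ (Fin d),
      ∀ j : ZMod m, f (p j) = q j) ↔
    (∀ j : ZMod m, ∀ i : ℕ, 1 ≤ i → i ≤ min (d + 1) (m - 1) →
      ‖p j - p (j + (i : ZMod m))‖ = ‖q j - q (j + (i : ZMod m))‖) := by
  refine ⟨fun ⟨f, hf⟩ j i _ _ => by simp only [← dist_eq_norm, ← hf, f.dist_eq], fun h => ?_⟩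
  have hdist {a b : ℕ} (ha : a ≤ b + (d + 1)) (hb : b ≤ a + (d + 1)) :
      dist (p a) (p b) = dist (q a) (q b) := by
    rcases le_total a b with hab | hba
    · exact dist_eq_of_cyclic_norm_sub_eq hm h hab hb
    · rw [dist_comm, dist_comm (q a)]
      exact dist_eq_of_cyclic_norm_sub_eq hm h hba ha
  have hp₀ : affineSpan ℝ (range fun i : Fin (d + 1) => p (i : ℕ)) = ⊤ := by
    simpa using hp 0
  let b : AffineBasis (Fin (d + 1)) ℝ (EuclideanSpace ℝ (Fin d)) :=
    ⟨_, affineIndependent_of_affineSpan_eq_top hp₀ (by simp), hp₀⟩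
  obtain ⟨f, hf⟩ := b.exists_isometryEquiv_of_congruent (w := fun i => q (i : ℕ))
    (congruent_iff_dist_eq.2 fun i j => hdist (by omega) (by omega))
  refine ⟨f, fun j => ?_⟩
  have : NeZero m := ⟨by omega⟩
  obtain ⟨k, rfl⟩ := ZMod.natCast_zmod_surjective j
  exact f.isometry.apply_eq_of_spanning_windows (p := fun k => p k) (q := fun k => q k)
    (fun j => by simpa using hq j) (fun a b hab hb => hdist (by omega) hb)
    (fun i hi => hf ⟨i, by omega⟩) k

/-- for generic cyclically ordered lists `p, q : ZMod m → ℝ^d`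
(every `d+1` cyclically consecutive points affinely span `ℝ^d`), there is an isometry of
`ℝ^d` matching `p` with `q` (in order) iff the cyclic distance matrices coincide:
`‖p j - p (j+i)‖ = ‖q j - q (j+i)‖` for all `j ∈ ZMod m` and `1 ≤ i ≤ min (d+1) (m-1)`. -/
theorem cyclic_distance_matrix_complete (d m : ℕ) (hd : 1 ≤ d) (hm : d + 1 ≤ m)
    (p q : ZMod m → EuclideanSpace ℝ (Fin d))
    (hp : ∀ j : ZMod m,
      affineSpan ℝ (Set.range fun i : Fin (d + 1) => p (j + ((i : ℕ) : ZMod m))) = ⊤)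
    (hq : ∀ j : ZMod m,
      affineSpan ℝ (Set.range fun i : Fin (d + 1) => q (j + ((i : ℕ) : ZMod m))) = ⊤) :
    (∃ f : EuclideanSpace ℝ (Fin d) ≃ᵢ EuclideanSpace ℝ (Fin d),
      ∀ j : ZMod m, f (p j) = q j) ↔
    (∀ j : ZMod m, ∀ i : ℕ, 1 ≤ i → i ≤ min (d + 1) (m - 1) →
      ‖p j - p (j + (i : ZMod m))‖ = ‖q j - q (j + (i : ZMod m))‖) :=
  cyclic_distance_matrix_complete_general d m hm p q hp hq
end
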